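/- Fix ν > 0 and k ∈ ℕ with k ≥ 1. There exist A = A(k) < ∞ and ε̂ = ε̂(k) ∈ (0,1) with νε̂ < 1 such that for all ε ∈ (0, ε̂) and all n ∈ ℕ with n ≥ A|log ε|, the n-fold iterate of the diagonal voting function satisfies g_{νε}^{(n)}((1 − νε)/2 − ε) ≤ ε^k. -/
import Mathlib


/-- The voting function `g_γ`. -/
noncomputable def voteg (γ p₁ p₂ p₃ : ℝ) : ℝ :=
  p₁ * p₂ * p₃ + p₁ * p₂ * (1 - p₃) + p₁ * (1 - p₂) * p₃ + (1 - p₁) * p₂ * p₃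
    + (2 * γ / (3 + 3 * γ)) *
      ((1 - p₁) * (1 - p₂) * p₃ + (1 - p₁) * p₂ * (1 - p₃) + p₁ * (1 - p₂) * (1 - p₃))

/-- The diagonal voting function `g_γ(p) := g_γ(p,p,p)`. -/
noncomputable def votegd (γ p : ℝ) : ℝ := voteg γ p p p

lemma votegd_eq (γ p : ℝ) :
    votegd γ p = p^3 + 3*p^2*(1-p) + 3*(2*γ/(3+3*γ))*p*(1-p)^2 := by
  unfold votegd voteg; ring

lemma votegd_key (γ p : ℝ) (hγ : 0 ≤ γ) :
    (1-γ)/2 - votegd γ p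
      = ((1-γ)/2 - p) * (1 + (2 - 3*(2*γ/(3+3*γ)))*p*(1-p)) := by
  have h : (3+3*γ) ≠ 0 := by positivity
  rw [votegd_eq]; field_simp; ring

lemma votegd_nonneg (γ p : ℝ) (hγ : 0 ≤ γ) (hp : 0 ≤ p) (hp1 : p ≤ 1) :
    0 ≤ votegd γ p := by
  have hc : 0 ≤ 2*γ/(3+3*γ) := by positivity
  rw [votegd_eq]
  have h1 : 0 ≤ p^3 := by positivity
  have h2 : 0 ≤ 3*p^2*(1-p) := by nlinarith [sq_nonneg p]
  have h3 : 0 ≤ 3*(2*γ/(3+3*γ))*p*(1-p)^2 := by positivity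
  linarith

lemma votegd_le_self (γ p : ℝ) (hγ : 0 ≤ γ) (hp : 0 ≤ p) (hp1 : p ≤ 1)
    (hpq : p ≤ (1-γ)/2) : votegd γ p ≤ p := by
  have hc : 0 ≤ 2*γ/(3+3*γ) := by positivity
  have hc2 : 2*γ/(3+3*γ) ≤ 2/3 := by
    rw [div_le_iff₀ (by positivity)]; nlinarith
  have hkey := votegd_key γ p hγ
  nlinarith [mul_nonneg hp (by linarith : (0:ℝ) ≤ 1-p),
    mul_nonneg (mul_nonneg (by linarith : (0:ℝ) ≤ 2 - 3*(2*γ/(3+3*γ))) hp)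
      (by linarith : (0:ℝ) ≤ 1-p),
    (by linarith : (0:ℝ) ≤ (1-γ)/2 - p)]

lemma votegd_grow (γ p : ℝ) (hγ : 0 ≤ γ) (hγ' : γ ≤ 1/16)
    (hp : 1/4 ≤ p) (hpq : p ≤ (1-γ)/2) :
    (5/4) * ((1-γ)/2 - p) ≤ (1-γ)/2 - votegd γ p := by
  have hc : 0 ≤ 2*γ/(3+3*γ) := by positivity
  have hc2 : 2*γ/(3+3*γ) ≤ 1/24 := by
    rw [div_le_iff₀ (by positivity)]; nlinarith
  have hkey := votegd_key γ p hγ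
  have hp2 : p ≤ 1/2 := by linarith
  have hfac : (5/4:ℝ) ≤ 1 + (2 - 3*(2*γ/(3+3*γ)))*p*(1-p) := by
    nlinarith [mul_nonneg (by linarith : (0:ℝ) ≤ p - 1/4) (by linarith : (0:ℝ) ≤ 3/4 - p)]
  nlinarith [(by linarith : (0:ℝ) ≤ (1-γ)/2 - p)]

lemma votegd_contract (γ p : ℝ) (hγ : 0 ≤ γ) (hγ' : γ ≤ 1/16)
    (hp : 0 ≤ p) (hp' : p ≤ 1/4) : votegd γ p ≤ (7/8) * p := by
  have hc : 0 ≤ 2*γ/(3+3*γ) := by positivity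
  have hc2 : 2*γ/(3+3*γ) ≤ 1/24 := by
    rw [div_le_iff₀ (by positivity)]; nlinarith
  rw [votegd_eq]
  have hb : p*(1-p)^2 ≤ p := by nlinarith [mul_nonneg hp (by linarith : (0:ℝ) ≤ 2-p)]
  have hbn : 0 ≤ p*(1-p)^2 := by positivity
  have h1 : 3*(2*γ/(3+3*γ))*p*(1-p)^2 ≤ (1/8)*p := by
    nlinarith [mul_le_mul hc2 hb hbn (by norm_num : (0:ℝ) ≤ 1/24)]
  nlinarith [sq_nonneg p, mul_nonneg hp hp]

set_option maxHeartbeats 1000000 in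
/-- bias amplification below the unstable fixed point: after
`O(|log ε|)` iterations of `g_{νε}` starting from `(1-νε)/2 - ε`, the value is
at most `ε^k`. -/
theorem voteg_bias_amplification_down (ν : ℝ) (hν : 0 < ν) (k : ℕ) (hk : 1 ≤ k) :
    ∃ A : ℝ, ∃ εhat : ℝ, εhat ∈ Set.Ioo (0 : ℝ) 1 ∧ ν * εhat < 1 ∧
      ∀ ε ∈ Set.Ioo (0 : ℝ) εhat, ∀ n : ℕ, A * |Real.log ε| ≤ (n : ℝ) →
        (fun x => votegd (ν * ε) x)^[n] ((1 - ν * ε) / 2 - ε) ≤ ε ^ k := by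
  have hexp1 : (2:ℝ) ≤ Real.exp 1 := by
    have := Real.add_one_le_exp (1:ℝ); linarith
  have hexpneg : Real.exp (-1) ≤ 1/2 := by
    rw [Real.exp_neg, inv_le_comm₀ (by positivity) (by norm_num)]
    simpa using hexp1
  have hlog54 : (1/5:ℝ) ≤ Real.log (5/4) := by
    rw [Real.le_log_iff_exp_le (by norm_num)]
    have h1 : (4/5:ℝ) ≤ Real.exp (-(1/5)) := by
      have := Real.add_one_le_exp (-(1/5):ℝ); linarith
    have h2 : Real.exp (1/5:ℝ) = (Real.exp (-(1/5)))⁻¹ := by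
      rw [← Real.exp_neg]; norm_num
    rw [h2, inv_le_comm₀ (by positivity) (by norm_num)]
    linarith
  have hlog87 : (1/8:ℝ) ≤ Real.log (8/7) := by
    rw [Real.le_log_iff_exp_le (by norm_num)]
    have h1 : (7/8:ℝ) ≤ Real.exp (-(1/8)) := by
      have := Real.add_one_le_exp (-(1/8):ℝ); linarith
    have h2 : Real.exp (1/8:ℝ) = (Real.exp (-(1/8)))⁻¹ := by
      rw [← Real.exp_neg]; norm_num
    rw [h2, inv_le_comm₀ (by positivity) (by norm_num)]
    linarith
  refine ⟨(10 + 8*k : ℝ), min (Real.exp (-1)) (1/(16*ν)) / 2, ⟨by positivity, ?_⟩, ?_, ?_⟩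
  · calc min (Real.exp (-1)) (1/(16*ν)) / 2 ≤ Real.exp (-1) / 2 := by
          gcongr; exact min_le_left _ _
      _ < 1 := by linarith
  · calc ν * (min (Real.exp (-1)) (1/(16*ν)) / 2) ≤ ν * (1/(16*ν) / 2) := by
          gcongr; exact min_le_right _ _
      _ = 1/32 := by field_simp; ring
      _ < 1 := by norm_num
  intro ε hε n hn
  obtain ⟨hε0, hεub⟩ := hε
  have hεexp : ε < Real.exp (-1) := by
    have h1 : min (Real.exp (-1)) (1/(16*ν)) / 2 ≤ Real.exp (-1) / 2 := by
      gcongr; exact min_le_left _ _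
    have h2 : Real.exp (-1) / 2 < Real.exp (-1) := half_lt_self (Real.exp_pos _)
    linarith
  have hε4 : ε < 1/4 := by
    have h1 := min_le_left (Real.exp (-1)) (1/(16*ν))
    linarith
  have hε1 : ε < 1 := by linarith
  -- γ := ν * ε
  set γ : ℝ := ν * ε with hγdef
  have hγ0 : 0 ≤ γ := by positivity
  have hγ16 : γ ≤ 1/16 := by
    have h1 : ε < 1/(16*ν) / 2 := lt_of_lt_of_le hεub (by gcongr; exact min_le_right _ _)
    have h2 : γ < ν * (1/(16*ν) / 2) := by exact mul_lt_mul_of_pos_left h1 hν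
    have h3 : ν * (1/(16*ν) / 2) = 1/32 := by field_simp; ring
    linarith [h2.trans_eq h3]
  -- L := |log ε|
  set L : ℝ := -Real.log ε with hLdef
  have hlogε : Real.log ε < -1 := by
    have := Real.log_lt_log hε0 hεexp
    rwa [Real.log_exp] at this
  have hL1 : 1 < L := by simp only [hLdef]; linarith
  have habs : |Real.log ε| = L := by rw [abs_of_neg (by linarith)]
  rw [habs] at hn
  -- the two step counts
  set m₁ : ℕ := ⌈5*L⌉₊ with hm₁def
  set m₂ : ℕ := ⌈8*(k:ℝ)*L⌉₊ with hm₂def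
  have hkR : (1:ℝ) ≤ (k:ℝ) := by exact_mod_cast hk
  have hm₁l : 5*L ≤ (m₁:ℝ) := Nat.le_ceil _
  have hm₁u : (m₁:ℝ) ≤ 5*L + 1 := le_of_lt (Nat.ceil_lt_add_one (by positivity))
  have hm₂l : 8*(k:ℝ)*L ≤ (m₂:ℝ) := Nat.le_ceil _
  have hm₂u : (m₂:ℝ) ≤ 8*(k:ℝ)*L + 1 := le_of_lt (Nat.ceil_lt_add_one (by positivity))
  have hmn : m₁ + m₂ ≤ n := by
    have hreal : (m₁:ℝ) + (m₂:ℝ) ≤ (n:ℝ) := by nlinarith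
    exact_mod_cast hreal
  -- exponential bounds
  have hεinv : Real.exp L = ε⁻¹ := by
    rw [hLdef, Real.exp_neg, Real.exp_log hε0]
  have hpow54 : ε⁻¹ ≤ (5/4:ℝ)^m₁ := by
    have heq : (5/4:ℝ)^m₁ = Real.exp ((m₁:ℝ) * Real.log (5/4)) := by
      rw [← Real.log_pow, Real.exp_log (by positivity)]
    rw [heq, ← hεinv]
    apply Real.exp_le_exp.2
    have := mul_le_mul hm₁l hlog54 (by norm_num) (Nat.cast_nonneg m₁)
    linarith
  have hpow78 : (7/8:ℝ)^m₂ ≤ ε^k := by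
    have heq1 : (7/8:ℝ)^m₂ = Real.exp ((m₂:ℝ) * Real.log (7/8)) := by
      rw [← Real.log_pow, Real.exp_log (by positivity)]
    have heq2 : ε^k = Real.exp ((k:ℝ) * Real.log ε) := by
      rw [← Real.log_pow, Real.exp_log (by positivity)]
    have hlog78 : Real.log (7/8) = -Real.log (8/7) := by
      rw [show (7/8:ℝ) = (8/7)⁻¹ by norm_num, Real.log_inv]
    rw [heq1, heq2]
    apply Real.exp_le_exp.2
    rw [hlog78]
    have h1 : 8*(k:ℝ)*L*(1/8) ≤ (m₂:ℝ)*Real.log (8/7) :=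
      mul_le_mul hm₂l hlog87 (by norm_num) (Nat.cast_nonneg m₂)
    have h2 : Real.log ε = -L := by rw [hLdef]; ring
    rw [h2]
    nlinarith
  -- the dynamics
  set q : ℝ := (1-γ)/2 with hqdef
  have hqlb : 15/32 ≤ q := by rw [hqdef]; linarith
  have hqub : q ≤ 1/2 := by rw [hqdef]; linarith
  set P : ℕ → ℝ := fun i => (fun x => votegd γ x)^[i] (q - ε) with hPdef
  have hPs : ∀ i, P (i+1) = votegd γ (P i) := by
    intro i
    simp only [hPdef]
    rw [Function.iterate_succ_apply']
  have hP0 : P 0 = q - ε := rfl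
  have hInv : ∀ i, 0 ≤ P i ∧ P i ≤ q - ε := by
    intro i
    induction i with
    | zero => rw [hP0]; constructor <;> linarith
    | succ i ih =>
      obtain ⟨h0, h1⟩ := ih
      have hple1 : P i ≤ 1 := by linarith
      have hpleq : P i ≤ (1-γ)/2 := by rw [← hqdef]; linarith
      rw [hPs]
      refine ⟨votegd_nonneg γ _ hγ0 h0 hple1, ?_⟩
      exact le_trans (votegd_le_self γ _ hγ0 h0 hple1 hpleq) h1
  have hGrow : ∀ i, 1/4 ≤ P i → (5/4:ℝ)^i * ε ≤ q - P i := by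
    intro i
    induction i with
    | zero => intro _; rw [hP0]; simp
    | succ i ih =>
      intro h14
      obtain ⟨h0, h1⟩ := hInv i
      have hple1 : P i ≤ 1 := by linarith
      have hpleq : P i ≤ (1-γ)/2 := by rw [← hqdef]; linarith
      have hdec : P (i+1) ≤ P i := by
        rw [hPs]; exact votegd_le_self γ _ hγ0 h0 hple1 hpleq
      have h14' : 1/4 ≤ P i := le_trans h14 hdec
      have hI := ih h14'
      have hg := votegd_grow γ (P i) hγ0 hγ16 h14' hpleq
      rw [← hqdef] at hg
      rw [hPs]
      calc (5/4:ℝ)^(i+1) * ε = (5/4) * ((5/4:ℝ)^i * ε) := by ring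
        _ ≤ (5/4) * (q - P i) := by linarith
        _ ≤ q - votegd γ (P i) := hg
  have hm1 : P m₁ ≤ 1/4 := by
    by_contra h
    push_neg at h
    have hg := hGrow m₁ (le_of_lt h)
    have hlb : 1 ≤ (5/4:ℝ)^m₁ * ε := by
      have h2 : ε⁻¹ * ε ≤ (5/4:ℝ)^m₁ * ε :=
        mul_le_mul_of_nonneg_right hpow54 (le_of_lt hε0)
      rwa [inv_mul_cancel₀ (ne_of_gt hε0)] at h2
    linarith
  have hPh2 : ∀ j, P (m₁ + j) ≤ (7/8:ℝ)^j * (1/4) := by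
    intro j
    induction j with
    | zero => simpa using hm1
    | succ j ih =>
      have h78 : (7/8:ℝ)^j ≤ 1 := pow_le_one₀ (by norm_num) (by norm_num)
      have hle : P (m₁+j) ≤ 1/4 := by nlinarith
      obtain ⟨h0, _⟩ := hInv (m₁+j)
      have hc := votegd_contract γ (P (m₁+j)) hγ0 hγ16 h0 hle
      have : m₁ + (j+1) = (m₁+j) + 1 := by ring
      rw [this, hPs]
      calc votegd γ (P (m₁+j)) ≤ (7/8) * P (m₁+j) := hc
        _ ≤ (7/8) * ((7/8:ℝ)^j * (1/4)) := by linarith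
        _ = (7/8:ℝ)^(j+1) * (1/4) := by ring
  -- conclusion
  have hfin := hPh2 (n - m₁)
  have hidx : m₁ + (n - m₁) = n := by omega
  rw [hidx] at hfin
  have hmono : (7/8:ℝ)^(n-m₁) ≤ (7/8:ℝ)^m₂ :=
    pow_le_pow_of_le_one (by norm_num) (by norm_num) (by omega)
  have h78pos : (0:ℝ) ≤ (7/8:ℝ)^m₂ := by positivity
  show P n ≤ ε ^ k
  calc P n ≤ (7/8:ℝ)^(n-m₁) * (1/4) := hfin
    _ ≤ (7/8:ℝ)^m₂ * (1/4) := by linarith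
    _ ≤ (7/8:ℝ)^m₂ := by linarith
    _ ≤ ε^k := hpow78
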